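/- arXiv:1903.05774 — 2 statements merged into one kernel-verified Lean document; each statement's English description precedes it below -/
import Mathlib

section
/- Duple geometries bind only to their own type: for duple indices i and j (among m duple types), the duple geometry λ(i) is abut-compatible with λ(j) if and only if i = j. -/
def abutCompat {n : ℕ} (g h : Fin n → Bool) : Prop :=
  ∀ p : Fin n, ¬(g p = true ∧ h (Fin.rev p) = true)

def dupleGeom {k m : ℕ} (i : Fin m) : Fin (4 * k + 2) → Bool :=
  fun p => decide (p.val = 4 * k + 1 ∨ p.val = 1 + i.val ∨
    (3 * k + 1 ≤ p.val ∧ p.val ≤ 4 * k ∧ p.val ≠ 4 * k - i.val))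

theorem duple_geometries_self_binding {k m : ℕ} (hm : 1 ≤ m) (hk : m ≤ k)
    (i j : Fin m) :
    abutCompat (dupleGeom (k := k) i) (dupleGeom (k := k) j) ↔ i = j := by
  have hi := i.isLt
  have hj := j.isLt
  constructor
  · intro h
    by_contra hne
    have hij : i.val ≠ j.val := fun e => hne (Fin.ext e)
    exact h ⟨1 + i.val, by omega⟩ (by
      constructor <;> simp [dupleGeom, Fin.rev] <;> omega)
  · rintro rfl
    rintro p ⟨hg, hh⟩
    have hp := p.isLt
    simp [dupleGeom, Fin.rev] at hg hh
    omega
end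

section
/- Correctness of the 2-glue construction: with glue labels gα and gβ where each binds only to itself, a tile side labeled (gα, γα(i)) can attach to an abutting tile side labeled (gα, γα(j)) iff G i j = true, can attach to (gβ, γβ(j)) never (glue mismatch), and two sides labeled (gα, γα(i)) and (gβ, γβ(j)) may coexist as a mismatch for any i, j since their geometries are always abut-compatible. -/
def gammaAlpha {n : ℕ} (G : Fin n → Fin n → Bool) (i : Fin n) : Fin (4 * n) → Bool :=
  fun p => decide (p.val = i.val ∨ ∃ j : Fin n, G i j = false ∧ p.val = 4 * n - 1 - j.val)

def gammaBeta {n : ℕ} (G : Fin n → Fin n → Bool) (i : Fin n) : Fin (4 * n) → Bool :=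
  fun p => decide (p.val = n + i.val ∨ ∃ j : Fin n, G i j = false ∧ p.val = 3 * n - 1 - j.val)

-- A side is a pair (glue, geometry); glues are Bool (false = gα, true = gβ) and bind iff equal.
def attach {n : ℕ} (s₁ s₂ : Bool × (Fin n → Bool)) : Prop :=
  s₁.1 = s₂.1 ∧ abutCompat s₁.2 s₂.2

theorem two_glue_construction_correct {n : ℕ} (hn : 1 ≤ n)
    (G : Fin n → Fin n → Bool) (hsym : ∀ i j, G i j = G j i) (i j : Fin n) :
    (attach (false, gammaAlpha G i) (false, gammaAlpha G j) ↔ G i j = true) ∧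
    ¬ attach (false, gammaAlpha G i) (true, gammaBeta G j) ∧
    abutCompat (gammaAlpha G i) (gammaBeta G j) := by
  have hi := i.isLt
  have hj := j.isLt
  refine ⟨⟨?_, ?_⟩, ?_, ?_⟩
  · rintro ⟨-, hc⟩
    by_contra hG
    rw [Bool.not_eq_true] at hG
    have hG' : G j i = false := (hsym j i).trans hG
    refine hc ⟨i.val, by omega⟩ ⟨?_, ?_⟩
    · simp [gammaAlpha]
    · simp only [gammaAlpha, Fin.val_rev, decide_eq_true_eq]
      exact Or.inr ⟨i, hG', by omega⟩
  · intro hG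
    refine ⟨rfl, fun p ⟨h1, h2⟩ => ?_⟩
    simp only [gammaAlpha, Fin.val_rev, decide_eq_true_eq] at h1 h2
    rcases h1 with h1 | ⟨k, hk, hk'⟩ <;> rcases h2 with h2 | ⟨m, hm, hm'⟩
    · omega
    · have hmi : m.val = i.val := by have := m.isLt; omega
      rw [Fin.ext hmi] at hm
      rw [hsym] at hG
      simp [hG] at hm
    · have hkj : k.val = j.val := by have := k.isLt; omega
      rw [Fin.ext hkj] at hk
      simp [hG] at hk
    · have := k.isLt; have := m.isLt; omega
  · rintro ⟨h, -⟩
    simp at h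
  · rintro p ⟨h1, h2⟩
    simp only [gammaAlpha, gammaBeta, Fin.val_rev, decide_eq_true_eq] at h1 h2
    rcases h1 with h1 | ⟨k, -, hk'⟩ <;> rcases h2 with h2 | ⟨m, -, hm'⟩ <;>
      [skip; (have := m.isLt); (have := k.isLt); (have := k.isLt; have := m.isLt)] <;> omega
end
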